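/- There exist a (countably infinite) set X, a map f : X → X, and a point x₀ ∈ X such that f(x₀) ≠ x₀, the cardinality of f⁻²(x₀) equals exactly 8 = 2³, the cardinality of f⁻¹(x) is at most 2 for every x ≠ x₀, and f has an iterative square root, i.e., there exists g : X → X with g ∘ g = f. (This shows that the strict bound #f⁻²(x₀) > N³ in the non-existence criterion for iterative roots is optimal for N = 2.) -/
import Mathlib

inductive XX : Type where
  | p : ℕ → XX
  | a : Fin 2 → XX
  | l2 : Fin 2 → Fin 2 → XX
  | l3 : Fin 2 → Fin 2 → XX
  | e : Fin 2 → Fin 2 → Fin 2 → ℕ → XX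
deriving DecidableEq

namespace XX

def g : XX → XX
  | .p n => .p (n+1)
  | .a _ => .p 0
  | .l2 i _ => .a i
  | .l3 i j => .l2 i j
  | .e i j _ 0 => .l3 i j
  | .e i j k (n+1) => .e i j k n

def enc : XX → ℕ × ℕ × Fin 2 × Fin 2 × Fin 2
  | .p n => (0, n, 0, 0, 0)
  | .a i => (1, 0, i, 0, 0)
  | .l2 i j => (2, 0, i, j, 0)
  | .l3 i j => (3, 0, i, j, 0)
  | .e i j k n => (4, n, i, j, k)

lemma enc_inj : Function.Injective enc := by
  intro x y h
  cases x <;> cases y <;> simp [enc] at h <;> simp_all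

instance : Countable XX := enc_inj.countable

instance : Infinite XX := Infinite.of_injective p (fun a b h => by injection h)

lemma g4_eq (x : XX) : g (g (g (g x))) = p 0 ↔ ∃ i j k, x = e i j k 0 := by
  cases x with
  | p n => simp [g]
  | a i => simp [g]
  | l2 i j => simp [g]
  | l3 i j => simp [g]
  | e i j k n =>
    match n with
    | 0 => simp [g]
    | 1 => simp [g]
    | 2 => simp [g]
    | 3 => simp [g]
    | (m+4) => simp [g]

lemma key : ∀ x : XX, x ≠ p 0 → ∃ u v : XX, (fun y => g (g y)) ⁻¹' {x} ⊆ {u, v} := by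
  intro x hx
  cases x with
  | p n =>
    match n with
    | 0 => exact absurd rfl hx
    | 1 =>
      refine ⟨a 0, a 1, ?_⟩
      intro y hy
      simp only [Set.mem_preimage, Set.mem_singleton_iff] at hy
      cases y with
      | p m => simp [g] at hy
      | a i => fin_cases i <;> simp
      | l2 i j => simp [g] at hy
      | l3 i j => simp [g] at hy
      | e i j k m => rcases m with _ | _ | m <;> simp [g] at hy
    | (m+2) =>
      refine ⟨p m, p m, ?_⟩
      intro y hy
      simp only [Set.mem_preimage, Set.mem_singleton_iff] at hy
      cases y with
      | p m' => simp [g] at hy; simp [hy]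
      | a i => simp [g] at hy
      | l2 i j => simp [g] at hy
      | l3 i j => simp [g] at hy
      | e i j k m' => rcases m' with _ | _ | m' <;> simp [g] at hy
  | a i =>
    refine ⟨l3 i 0, l3 i 1, ?_⟩
    intro y hy
    simp only [Set.mem_preimage, Set.mem_singleton_iff] at hy
    cases y with
    | p m => simp [g] at hy
    | a i' => simp [g] at hy
    | l2 i' j' => simp [g] at hy
    | l3 i' j' => simp [g] at hy; subst hy; fin_cases j' <;> simp
    | e i' j' k' m => rcases m with _ | _ | m <;> simp [g] at hy
  | l2 i j =>
    refine ⟨e i j 0 0, e i j 1 0, ?_⟩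
    intro y hy
    simp only [Set.mem_preimage, Set.mem_singleton_iff] at hy
    cases y with
    | p m => simp [g] at hy
    | a i' => simp [g] at hy
    | l2 i' j' => simp [g] at hy
    | l3 i' j' => simp [g] at hy
    | e i' j' k' m =>
      rcases m with _ | _ | m <;> simp [g] at hy
      obtain ⟨h1, h2⟩ := hy
      subst h1; subst h2; fin_cases k' <;> simp
  | l3 i j =>
    refine ⟨e i j 0 1, e i j 1 1, ?_⟩
    intro y hy
    simp only [Set.mem_preimage, Set.mem_singleton_iff] at hy
    cases y with
    | p m => simp [g] at hy
    | a i' => simp [g] at hy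
    | l2 i' j' => simp [g] at hy
    | l3 i' j' => simp [g] at hy
    | e i' j' k' m =>
      rcases m with _ | _ | m <;> simp [g] at hy
      obtain ⟨h1, h2⟩ := hy
      subst h1; subst h2; fin_cases k' <;> simp
  | e i j k n =>
    refine ⟨e i j k (n+2), e i j k (n+2), ?_⟩
    intro y hy
    simp only [Set.mem_preimage, Set.mem_singleton_iff] at hy
    cases y with
    | p m => simp [g] at hy
    | a i' => simp [g] at hy
    | l2 i' j' => simp [g] at hy
    | l3 i' j' => simp [g] at hy
    | e i' j' k' m =>
      rcases m with _ | _ | m <;> simp [g] at hy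
      obtain ⟨h1, h2, h3, h4⟩ := hy
      subst h1; subst h2; subst h3; subst h4; simp

end XX

/-- **Remark 4 (optimality of the bound `N³`).** There is a countably
infinite set `X`, a map `f : X → X` and a point `x₀` with `f(x₀) ≠ x₀`,
`#f⁻²(x₀) = 8 = 2³` and `#f⁻¹(x) ≤ 2` for all `x ≠ x₀`, such that `f` has an
iterative square root. -/
theorem exists_countable_counterexample_optimal_bound :
    ∃ (X : Type) (_ : Countable X) (_ : Infinite X) (f : X → X) (x₀ : X),
      f x₀ ≠ x₀ ∧
      Cardinal.mk ((fun y => f (f y)) ⁻¹' {x₀}) = (8 : Cardinal) ∧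
      (∀ x : X, x ≠ x₀ → Cardinal.mk (f ⁻¹' {x}) ≤ (2 : Cardinal)) ∧
      ∃ g : X → X, g ∘ g = f := by
  refine ⟨XX, inferInstance, inferInstance, XX.g ∘ XX.g, XX.p 0, ?_, ?_, ?_, XX.g, rfl⟩
  · simp [XX.g]
  · have hset : ((fun y => (XX.g ∘ XX.g) ((XX.g ∘ XX.g) y)) ⁻¹' {XX.p 0})
        = Set.range (fun t : Fin 2 × Fin 2 × Fin 2 => XX.e t.1 t.2.1 t.2.2 0) := by
      ext x
      simp only [Set.mem_preimage, Set.mem_singleton_iff, Function.comp, Set.mem_range,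
        Prod.exists, XX.g4_eq]
      constructor
      · rintro ⟨i, j, k, rfl⟩; exact ⟨i, j, k, rfl⟩
      · rintro ⟨i, j, k, rfl⟩; exact ⟨i, j, k, rfl⟩
    have hinj : Function.Injective (fun t : Fin 2 × Fin 2 × Fin 2 => XX.e t.1 t.2.1 t.2.2 0) := by
      rintro ⟨i, j, k⟩ ⟨i', j', k'⟩ h
      simp only [XX.e.injEq] at h
      simp [Prod.ext_iff, h.1, h.2.1, h.2.2.1]
    rw [hset, Cardinal.mk_range_eq _ hinj, Cardinal.mk_fintype]
    norm_num
  · intro x hx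
    obtain ⟨u, v, hsub⟩ := XX.key x hx
    calc Cardinal.mk ((XX.g ∘ XX.g) ⁻¹' {x})
        ≤ Cardinal.mk ({u, v} : Set XX) := Cardinal.mk_le_mk_of_subset hsub
      _ ≤ Cardinal.mk ({v} : Set XX) + 1 := Cardinal.mk_insert_le
      _ ≤ 2 := by rw [Cardinal.mk_singleton]; norm_num
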